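/- For every M ≥ 1 there exist δ₀ > 0 and C > 0 (depending on N, q, M) such that: if f : S^N → ℝ is Lipschitz with constant at most M and ‖f‖_{L^∞(S^N)} ≤ δ₀, then ‖f‖_{L^∞(S^N)} ≤ C ‖f‖_{L^q(S^N)}^{2/(N+2-2s)}, where q = 2N/(N-2s). -/

import Mathlib

/-!
If `|f x| = δ`, the Lipschitz bound keeps `|f| ≥ δ / 2` on the cap of radius `r = δ / (2M)`
around `x`. The cone over that cap contains a cylinder of length `1/5` and cross-section radius
`r / 2`, so the cap has measure `≳ r ^ N`, whence `∫ |f| ^ q ≳ δ ^ (q + N) / M ^ N`. Finally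
`(q + N)⁻¹ = (N - 2s) / (2N) · 2 / (N + 2 - 2s)`.
-/

open MeasureTheory Metric Pointwise

theorem EuclideanSpace.norm_sq_eq_sq_zero_add_sum_succ {N : ℕ}
    (y : EuclideanSpace ℝ (Fin (N + 1))) :
    ‖y‖ ^ 2 = y 0 ^ 2 + ∑ j : Fin N, y j.succ ^ 2 := by
  simp only [EuclideanSpace.norm_sq_eq, Fin.sum_univ_succ, Real.norm_eq_abs, sq_abs]

def axialCylinder (N : ℕ) (ρ : ℝ) : Set (EuclideanSpace ℝ (Fin (N + 1))) :=
  {y | y 0 ∈ Set.Icc (3 / 5 : ℝ) (4 / 5) ∧ ∑ j : Fin N, y j.succ ^ 2 ≤ ρ ^ 2}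

theorem axialCylinder_subset_cone {N : ℕ} {r : ℝ} (hr0 : 0 ≤ r) (hr1 : r ≤ 1) :
    axialCylinder N (r / 2) ⊆
      Set.Ioo (0 : ℝ) 1 • (closedBall (EuclideanSpace.single 0 1) r ∩ sphere 0 1) := by
  rintro y ⟨⟨ha₁, ha₂⟩, hm⟩
  set t := ‖y‖
  have hty : t ^ 2 = y 0 ^ 2 + ∑ j : Fin N, y j.succ ^ 2 :=
    EuclideanSpace.norm_sq_eq_sq_zero_add_sum_succ y
  have hm0 : 0 ≤ ∑ j : Fin N, y j.succ ^ 2 := by positivity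
  have hat : y 0 ≤ t := by nlinarith [norm_nonneg y]
  have ht0 : 0 < t := by linarith
  have ht1 : t < 1 := by nlinarith
  have hu : ‖t⁻¹ • y‖ = 1 := by
    rw [norm_smul, norm_inv, norm_norm, inv_mul_cancel₀ ht0.ne']
  refine Set.mem_smul.mpr ⟨t, ⟨ht0, ht1⟩, t⁻¹ • y, ⟨?_, mem_sphere_zero_iff_norm.mpr hu⟩,
    smul_inv_smul₀ ht0.ne' y⟩
  rw [mem_closedBall, dist_eq_norm, ← pow_le_pow_iff_left₀ (norm_nonneg _) hr0 two_ne_zero]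
  -- `‖u - e₀‖² = 2 (1 - u₀)` for unit `u`, and `t - y₀ = (∑ j, y_{j+1}²) / (t + y₀)` is small
  have hdist : ‖t⁻¹ • y - EuclideanSpace.single 0 1‖ ^ 2 = 2 * (t - y 0) / t := by
    rw [norm_sub_sq_real, hu, EuclideanSpace.inner_single_right, PiLp.norm_single]
    simp only [norm_one, PiLp.smul_apply, smul_eq_mul, RCLike.conj_to_real, one_mul]
    field_simp
    ring
  rw [hdist, div_le_iff₀ ht0]
  nlinarith

theorem volume_axialCylinder (N : ℕ) {ρ : ℝ} (hρ : 0 ≤ ρ) :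
    volume (axialCylinder N ρ)
      = ENNReal.ofReal (1 / 5) * volume (closedBall (0 : EuclideanSpace ℝ (Fin N)) ρ) := by
  set T : EuclideanSpace ℝ (Fin (N + 1)) → ℝ × EuclideanSpace ℝ (Fin N) :=
    Prod.map id (MeasurableEquiv.toLp 2 (Fin N → ℝ)) ∘
      MeasurableEquiv.piFinSuccAbove (fun _ ↦ ℝ) 0 ∘ (MeasurableEquiv.toLp 2 (Fin (N + 1) → ℝ)).symm
  have hT : MeasurePreserving T volume volume :=
    ((MeasurePreserving.id volume).prod
        (EuclideanSpace.volume_preserving_symm_measurableEquiv_toLp (Fin N)).symm).comp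
      ((volume_preserving_piFinSuccAbove (fun _ ↦ ℝ) 0).comp
        (EuclideanSpace.volume_preserving_symm_measurableEquiv_toLp (Fin (N + 1))))
  have hset : axialCylinder N ρ = T ⁻¹' (Set.Icc (3 / 5 : ℝ) (4 / 5) ×ˢ closedBall 0 ρ) := by
    ext y
    simp only [axialCylinder, Set.mem_preimage, Set.mem_prod,
      mem_closedBall_zero_iff, ← pow_le_pow_iff_left₀ (norm_nonneg _) hρ two_ne_zero,
      EuclideanSpace.norm_sq_eq, Real.norm_eq_abs, sq_abs]
    rfl
  rw [hset, hT.measure_preimage (measurableSet_Icc.prod measurableSet_closedBall).nullMeasurableSet,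
    Measure.volume_eq_prod, Measure.prod_prod, Real.volume_Icc]
  norm_num

noncomputable def sphereCapConst (N : ℕ) : ℝ :=
  volume.real (ball (0 : EuclideanSpace ℝ (Fin N)) 1) / (5 * 2 ^ N)

theorem sphereCapConst_pos (N : ℕ) : 0 < sphereCapConst N :=
  div_pos (ENNReal.toReal_pos (measure_ball_pos _ _ one_pos).ne' measure_ball_lt_top.ne)
    (by positivity)

-- `toSphereBallBound_mul_measure_unitBall_le_toSphere_ball` only gives the order `r ^ (N + 1)`.
theorem sphereCapConst_mul_pow_le_toSphere_closedBall {N : ℕ}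
    (x₀ : sphere (0 : EuclideanSpace ℝ (Fin (N + 1))) 1) {r : ℝ} (hr0 : 0 ≤ r) (hr1 : r ≤ 1) :
    sphereCapConst N * r ^ N ≤
      (volume : Measure (EuclideanSpace ℝ (Fin (N + 1)))).toSphere.real (closedBall x₀ r) := by
  set e₀ : EuclideanSpace ℝ (Fin (N + 1)) := EuclideanSpace.single 0 1
  have he₀ : ‖e₀‖ = ‖(x₀ : EuclideanSpace ℝ (Fin (N + 1)))‖ := by
    rw [norm_eq_of_mem_sphere x₀, PiLp.norm_single, norm_one]
  set g := (ℝ ∙ (e₀ - x₀))ᗮ.reflection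
  have hg : g e₀ = x₀ := Submodule.reflection_sub he₀
  have hsub : g '' axialCylinder N (r / 2) ⊆
      Set.Ioo (0 : ℝ) 1 • ((↑) '' closedBall x₀ r) := by
    rintro _ ⟨y, hy, rfl⟩
    obtain ⟨t, ht, u, ⟨hu, hu1⟩, rfl⟩ := axialCylinder_subset_cone hr0 hr1 hy
    rw [map_smul, Subtype.image_closedBall]
    refine Set.smul_mem_smul ht ⟨?_, ?_⟩
    · rwa [mem_closedBall, ← hg, dist_eq_norm, ← map_sub, g.norm_map, ← dist_eq_norm]
    · simpa [g.norm_map] using hu1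
  have hvol : ENNReal.ofReal (sphereCapConst N * r ^ N) ≤
      (volume : Measure (EuclideanSpace ℝ (Fin (N + 1)))).toSphere (closedBall x₀ r) :=
    calc ENNReal.ofReal (sphereCapConst N * r ^ N)
        = volume (axialCylinder N (r / 2)) := by
          rw [volume_axialCylinder N (by positivity), Measure.addHaar_closedBall _ _ (by positivity)]
          rw [finrank_euclideanSpace_fin, ← ofReal_measureReal measure_ball_lt_top.ne,
            ← ENNReal.ofReal_mul (by positivity), ← ENNReal.ofReal_mul (by positivity),
            sphereCapConst]
          congr 1
          rw [div_pow]
          field_simp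
      _ = volume (g '' axialCylinder N (r / 2)) := by
          rw [g.image_eq_preimage_symm]
          exact (MeasurePreserving.measure_preimage_equiv (f := g.symm.toMeasurableEquiv)
            g.symm.measurePreserving _).symm
      _ ≤ volume (Set.Ioo (0 : ℝ) 1 • ((↑) '' closedBall x₀ r)) := measure_mono hsub
      _ ≤ _ := by
          rw [Measure.toSphere_apply' _ measurableSet_closedBall, finrank_euclideanSpace_fin]
          exact le_mul_of_one_le_left zero_le (by simp)
  exact ENNReal.ofReal_le_iff_le_toReal (measure_ne_top _ _) |>.mp hvol

theorem LipschitzWith.half_abs_le_abs_of_mem_closedBall {X : Type*} [PseudoMetricSpace X]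
    {K : NNReal} {f : X → ℝ} (hf : LipschitzWith K f) (hK : 0 < K) {x y : X}
    (hy : y ∈ closedBall x (|f x| / (2 * K))) :
    |f x| / 2 ≤ |f y| := by
  have hxy : |f x - f y| ≤ |f x| / 2 :=
    calc |f x - f y| = dist (f x) (f y) := (Real.dist_eq _ _).symm
      _ ≤ K * dist x y := hf.dist_le_mul x y
      _ ≤ K * (|f x| / (2 * K)) := by rw [dist_comm]; gcongr; exact hy
      _ = |f x| / 2 := by field_simp
  linarith [abs_sub_abs_le_abs_sub (f x) (f y)]

theorem LipschitzWith.mul_rpow_le_integral_rpow {N : ℕ} {q : ℝ} (hq : 0 < q) {K : NNReal}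
    (hK : 0 < K) {f : sphere (0 : EuclideanSpace ℝ (Fin (N + 1))) 1 → ℝ}
    (hf : LipschitzWith K f) {x : sphere (0 : EuclideanSpace ℝ (Fin (N + 1))) 1}
    (hx : |f x| ≤ 2 * K) :
    sphereCapConst N / (2 ^ q * (2 * K) ^ N) * |f x| ^ (q + N) ≤
      ∫ y, |f y| ^ q ∂(volume : Measure (EuclideanSpace ℝ (Fin (N + 1)))).toSphere := by
  set σ := (volume : Measure (EuclideanSpace ℝ (Fin (N + 1)))).toSphere
  set δ := |f x|
  set r := δ / (2 * K)
  have hδ : 0 ≤ δ := abs_nonneg _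
  have hr1 : r ≤ 1 := div_le_one_of_le₀ hx (by positivity)
  have hint : Integrable (fun y ↦ |f y| ^ q) σ := by
    rw [← integrableOn_univ]
    exact ((continuous_abs.comp hf.continuous).rpow_const fun _ ↦ Or.inr hq.le).continuousOn
      |>.integrableOn_compact isCompact_univ
  have hcap : (δ / 2) ^ q * σ.real (closedBall x r) ≤ ∫ y, |f y| ^ q ∂σ :=
    calc (δ / 2) ^ q * σ.real (closedBall x r) ≤ ∫ y in closedBall x r, |f y| ^ q ∂σ :=
          setIntegral_ge_of_const_le_real measurableSet_closedBall (measure_ne_top _ _)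
            (fun y hy ↦ Real.rpow_le_rpow (by positivity)
              (hf.half_abs_le_abs_of_mem_closedBall hK hy) hq.le)
            hint.integrableOn
      _ ≤ ∫ y, |f y| ^ q ∂σ := setIntegral_le_integral hint (.of_forall fun _ ↦ by positivity)
  calc sphereCapConst N / (2 ^ q * (2 * K) ^ N) * δ ^ (q + N)
      = (δ / 2) ^ q * (sphereCapConst N * r ^ N) := by
        rw [Real.div_rpow hδ zero_le_two, Real.rpow_add' hδ (by positivity), Real.rpow_natCast,
          div_pow]
        field_simp
    _ ≤ (δ / 2) ^ q * σ.real (closedBall x r) := by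
        gcongr
        exact sphereCapConst_mul_pow_le_toSphere_closedBall x (by positivity) hr1
    _ ≤ _ := hcap

theorem Real.le_inv_rpow_inv_mul_rpow_inv_of_mul_rpow_le {c p δ A : ℝ} (hc : 0 < c) (hp : 0 < p)
    (hδ : 0 ≤ δ) (h : c * δ ^ p ≤ A) :
    δ ≤ c⁻¹ ^ p⁻¹ * A ^ p⁻¹ := by
  have hA : 0 ≤ A := le_trans (by positivity) h
  calc δ = (δ ^ p) ^ p⁻¹ := (Real.rpow_rpow_inv hδ hp.ne').symm
    _ ≤ (c⁻¹ * A) ^ p⁻¹ := by gcongr; rwa [le_inv_mul_iff₀ hc]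
    _ = c⁻¹ ^ p⁻¹ * A ^ p⁻¹ := Real.mul_rpow (by positivity) hA

/-- Interpolation inequality on the sphere: for every `M ≥ 1` there exist `δ₀ > 0` and
`C > 0` such that any `M`-Lipschitz `f : S^N → ℝ` with `‖f‖_∞ ≤ δ₀` satisfies
`‖f‖_∞ ≤ C ‖f‖_{L^q}^{2/(N+2-2s)}`, where `q = 2N/(N-2s)`. -/
theorem stmt_8 (N : ℕ) (s : ℝ) (hs : 0 < s) (hs2 : s < N / 2) (M : ℝ) (hM : 1 ≤ M) :
    ∃ δ₀ > (0 : ℝ), ∃ C > (0 : ℝ),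
      ∀ f : sphere (0 : EuclideanSpace ℝ (Fin (N + 1))) 1 → ℝ,
        LipschitzWith (Real.toNNReal M) f →
        (∀ x, |f x| ≤ δ₀) →
        ∀ x, |f x| ≤ C *
          ((∫ y, |f y| ^ (2 * N / (N - 2 * s)) ∂(volume : Measure (EuclideanSpace ℝ (Fin (N + 1)))).toSphere) ^
              ((N - 2 * s) / (2 * N))) ^ (2 / (N + 2 - 2 * s)) := by
  have hN : 0 < (N : ℝ) := by linarith
  set q : ℝ := 2 * N / (N - 2 * s)
  have hq : 0 < q := div_pos (by positivity) (by linarith)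
  have hK : 0 < M.toNNReal := Real.toNNReal_pos.mpr (by linarith)
  set c := sphereCapConst N / (2 ^ q * (2 * (M.toNNReal : ℝ)) ^ N)
  have hc : 0 < c := div_pos (sphereCapConst_pos N) (by positivity)
  refine ⟨1, one_pos, c⁻¹ ^ (q + N)⁻¹, by positivity, fun f hf hf1 x ↦ ?_⟩
  have hexp : (N - 2 * s) / (2 * N) * (2 / (N + 2 - 2 * s)) = (q + N)⁻¹ := by
    have : (N : ℝ) - 2 * s ≠ 0 := by linarith
    have : (N : ℝ) + 2 - 2 * s ≠ 0 := by linarith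
    have hqN : q + N = N * (N + 2 - 2 * s) / (N - 2 * s) := by
      simp only [q]
      field_simp
      ring
    rw [hqN]
    field_simp
  rw [← Real.rpow_mul (integral_nonneg fun _ ↦ by positivity), hexp]
  refine Real.le_inv_rpow_inv_mul_rpow_inv_of_mul_rpow_le hc (by positivity) (abs_nonneg _) ?_
  refine hf.mul_rpow_le_integral_rpow hq hK ?_
  rw [Real.coe_toNNReal _ (by linarith)]
  linarith [hf1 x]
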